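/- arXiv:1303.6626 — 2 statements merged into one kernel-verified Lean document; each statement's English description precedes it below -/
import Mathlib

section
/- Let $c_1 > 0$, $d \ge 3$, $T > 0$, and let $D \subset \mathbb{R}^d$ be a bounded open set with $\mathrm{diam}(D)^2 = T$. Then there exist constants $c, C > 0$ depending only on $d, c_1, T$ such that for all distinct $x, y \in D$, $$c\, g_D(x,y) \le \int_0^T \Big(1 \wedge \frac{\delta_D(x)}{\sqrt t}\Big)\Big(1 \wedge \frac{\delta_D(y)}{\sqrt t}\Big) t^{-d/2} e^{-c_1 |x-y|^2/t}\, dt \le C\, g_D(x,y),$$ where $g_D(x,y) = \frac{1}{|x-y|^{d-2}}\Big(1 \wedge \frac{\delta_D(x)\delta_D(y)}{|x-y|^2}\Big)$. -/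
/-!
Write `a = δ_D(x)`, `b = δ_D(y)`, `r = |x - y|`, `p = d / 2`. Then `r² ≤ diam(D)² = T` and, since
`δ_D` is 1-Lipschitz, `|a - b| ≤ r`.

Lower bound: on `t ∈ (r²/2, r²]` the integrand is at least
`(1 ∧ a/r)(1 ∧ b/r) r^{-2p} e^{-2c₁}`, and `|a - b| ≤ r` gives
`1 ∧ ab/r² ≤ 2 (1 ∧ a/r)(1 ∧ b/r)`.

Upper bound (over all of `(0, ∞)`): the boundary factors are at most `1 ∧ ab/t`. For `t ≥ r²` this
is at most `1 ∧ ab/r²`, and `∫_{r²}^∞ t^{-p} dt = r^{2-2p}/(p-1)` as `p > 1`. For `t ≤ r²` it is at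
most `(1 ∧ ab/r²) r²/t`, and `x^q e^{-x} ≤ (q/e)^q` with `q = p + 1` bounds
`t^{-p-1} e^{-c₁r²/t}` by a constant times `r^{-2p-2}`.
-/

open Set MeasureTheory Metric Real

theorem rpow_mul_exp_neg_le {q x : ℝ} (hq : 0 < q) (hx : 0 ≤ x) :
    x ^ q * exp (-x) ≤ (q / exp 1) ^ q := by
  have key := mul_exp_neg_le_exp_neg_one (x / q)
  calc x ^ q * exp (-x) = (x / q * exp (-(x / q))) ^ q * q ^ q := by
        rw [mul_rpow (by positivity) (exp_pos _).le, div_rpow hx hq.le, ← exp_mul,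
          neg_mul, div_mul_cancel₀ x hq.ne']
        field_simp
    _ ≤ exp (-1) ^ q * q ^ q := by gcongr
    _ = (q / exp 1) ^ q := by
        rw [div_rpow hq.le (exp_pos _).le, exp_neg, inv_rpow (exp_pos _).le]; ring

theorem rpow_neg_mul_exp_neg_div_le {q x t : ℝ} (hq : 0 < q) (hx : 0 < x) (ht : 0 < t) :
    t ^ (-q) * exp (-x / t) ≤ (q / exp 1) ^ q * x ^ (-q) := by
  have key := rpow_mul_exp_neg_le hq (div_pos hx ht).le
  rw [div_rpow hx.le ht.le, ← neg_div] at key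
  rw [rpow_neg ht.le, rpow_neg hx.le]
  have hxq : 0 < x ^ q := rpow_pos_of_pos hx q
  calc (t ^ q)⁻¹ * exp (-x / t) = (x ^ q / t ^ q * exp (-x / t)) * (x ^ q)⁻¹ := by
        field_simp
    _ ≤ (q / exp 1) ^ q * (x ^ q)⁻¹ := by gcongr

theorem min_one_mul_min_one_le {a b : ℝ} (ha : 0 ≤ a) (hb : 0 ≤ b) :
    min 1 a * min 1 b ≤ min 1 (a * b) :=
  le_min (mul_le_one₀ (min_le_left 1 a) (le_min zero_le_one hb) (min_le_left 1 b))
    (mul_le_mul (min_le_right 1 a) (min_le_right 1 b) (le_min zero_le_one hb) ha)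

theorem min_one_mul_le_two_mul_min_one_mul_min_one {a b : ℝ} (ha : 0 ≤ a) (hb : 0 ≤ b)
    (hab : |a - b| ≤ 1) : min 1 (a * b) ≤ 2 * (min 1 a * min 1 b) := by
  rw [abs_le] at hab
  have h1 := min_le_left 1 (a * b)
  have h2 := min_le_right 1 (a * b)
  rcases le_total a 1 with ha1 | ha1 <;> rcases le_total b 1 with hb1 | hb1 <;>
    simp only [min_eq_left, min_eq_right, *] <;> nlinarith

theorem min_one_div_le_min_one_div_mul {A s t : ℝ} (ht : 0 < t) (hts : t ≤ s) :
    min 1 (A / t) ≤ min 1 (A / s) * (s / t) := by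
  have hst : 1 ≤ s / t := (one_le_div ht).2 hts
  rcases le_total 1 (A / s) with h | h
  · rw [min_eq_left h, one_mul]; exact (min_le_left _ _).trans hst
  · rw [min_eq_right h, div_mul_div_cancel₀ (ht.trans_le hts).ne']; exact min_le_right _ _

theorem min_one_div_sqrt_mul_le {a b t : ℝ} (ha : 0 ≤ a) (hb : 0 ≤ b) (ht : 0 < t) :
    min 1 (a / √t) * min 1 (b / √t) ≤ min 1 (a * b / t) := by
  have h := min_one_mul_min_one_le (div_nonneg ha (sqrt_nonneg t)) (div_nonneg hb (sqrt_nonneg t))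
  rwa [div_mul_div_comm, mul_self_sqrt ht.le] at h

theorem sq_rpow_one_sub_div_two {r : ℝ} (hr : 0 ≤ r) {d : ℕ} (hd : 2 ≤ d) :
    (r ^ 2) ^ (1 - (d : ℝ) / 2) = 1 / r ^ (d - 2) := by
  rw [← rpow_natCast r 2, ← rpow_mul hr, one_div, ← rpow_natCast, ← rpow_neg hr]
  congr 1
  push_cast [Nat.cast_sub hd]
  ring

/-- `boundaryHeatIntegrand (d / 2) c₁ δ_D(x) δ_D(y) |x - y|` is the integrand of the theorem. -/
noncomputable def boundaryHeatIntegrand (p c a b r t : ℝ) : ℝ :=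
  min 1 (a / √t) * min 1 (b / √t) * (t ^ (-p) * exp (-c * r ^ 2 / t))

namespace boundaryHeatIntegrand

variable {p c a b r t T : ℝ}

theorem nonneg (ha : 0 ≤ a) (hb : 0 ≤ b) (ht : 0 ≤ t) :
    0 ≤ boundaryHeatIntegrand p c a b r t := by
  unfold boundaryHeatIntegrand; positivity

theorem measurable : Measurable (boundaryHeatIntegrand p c a b r) := by
  unfold boundaryHeatIntegrand; fun_prop

theorem const_le_of_mem_Ioc (hp : 0 ≤ p) (hc : 0 ≤ c) (ha : 0 ≤ a) (hb : 0 ≤ b) (hr : 0 < r)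
    (ht : t ∈ Ioc (r ^ 2 / 2) (r ^ 2)) :
    min 1 (a / r) * min 1 (b / r) * ((r ^ 2) ^ (-p) * exp (-(2 * c))) ≤
      boundaryHeatIntegrand p c a b r t := by
  obtain ⟨hlt, hle⟩ := ht
  have ht0 : 0 < t := lt_trans (by positivity) hlt
  have hsqrt : √t ≤ r := sqrt_le_iff.2 ⟨hr.le, hle⟩
  have hexp : -(2 * c) ≤ -c * r ^ 2 / t := by
    rw [le_div_iff₀ ht0]; nlinarith
  have hpow : (r ^ 2) ^ (-p) ≤ t ^ (-p) := rpow_le_rpow_of_nonpos ht0 hle (neg_nonpos.2 hp)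
  unfold boundaryHeatIntegrand
  gcongr

theorem le_const_of_le_sq (hp : -1 < p) (hc : 0 < c) (ha : 0 ≤ a) (hb : 0 ≤ b) (hr : 0 < r)
    (ht : 0 < t) (htr : t ≤ r ^ 2) :
    boundaryHeatIntegrand p c a b r t ≤
      min 1 (a * b / r ^ 2) * ((p + 1) / exp 1) ^ (p + 1) * c ^ (-(p + 1)) * (r ^ 2) ^ (-p) := by
  have hmin := (min_one_div_sqrt_mul_le ha hb ht).trans
    (min_one_div_le_min_one_div_mul (A := a * b) ht htr)
  have hheat := rpow_neg_mul_exp_neg_div_le (by linarith : 0 < p + 1)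
    (mul_pos hc (pow_pos hr 2)) ht
  calc boundaryHeatIntegrand p c a b r t
      ≤ min 1 (a * b / r ^ 2) * (r ^ 2 / t) * (t ^ (-p) * exp (-c * r ^ 2 / t)) := by
        unfold boundaryHeatIntegrand; gcongr
    _ = min 1 (a * b / r ^ 2) * r ^ 2 * (t ^ (-(p + 1)) * exp (-(c * r ^ 2) / t)) := by
        rw [neg_add', rpow_sub_one ht.ne', neg_mul]; ring
    _ ≤ min 1 (a * b / r ^ 2) * r ^ 2 *
          (((p + 1) / exp 1) ^ (p + 1) * (c * r ^ 2) ^ (-(p + 1))) := by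
        gcongr
    _ = _ := by
        rw [mul_rpow hc.le (sq_nonneg r), neg_add' p, rpow_sub_one (pow_pos hr 2).ne']
        field_simp

theorem le_rpow_of_sq_le (hc : 0 ≤ c) (ha : 0 ≤ a) (hb : 0 ≤ b) (hr : 0 < r) (ht : r ^ 2 ≤ t) :
    boundaryHeatIntegrand p c a b r t ≤ min 1 (a * b / r ^ 2) * t ^ (-p) := by
  have ht0 : 0 < t := (pow_pos hr 2).trans_le ht
  have hmin := (min_one_div_sqrt_mul_le ha hb ht0).trans
    (min_le_min le_rfl (div_le_div_of_nonneg_left (mul_nonneg ha hb) (pow_pos hr 2) ht))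
  have hexp : exp (-c * r ^ 2 / t) ≤ 1 := exp_le_one_iff.2 (by
    rw [neg_mul, neg_div]; exact neg_nonpos.2 (by positivity))
  calc boundaryHeatIntegrand p c a b r t
      ≤ min 1 (a * b / r ^ 2) * (t ^ (-p) * 1) := by
        unfold boundaryHeatIntegrand; gcongr
    _ = _ := by rw [mul_one]

theorem integrableOn_of_le {s : Set ℝ} {g : ℝ → ℝ} (ha : 0 ≤ a) (hb : 0 ≤ b)
    (hs : MeasurableSet s) (hs0 : s ⊆ Ioi 0) (hg : IntegrableOn g s)
    (h : ∀ t ∈ s, boundaryHeatIntegrand p c a b r t ≤ g t) :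
    IntegrableOn (boundaryHeatIntegrand p c a b r) s := by
  refine hg.mono' measurable.aestronglyMeasurable ?_
  filter_upwards [ae_restrict_mem hs] with t ht
  rw [norm_of_nonneg (nonneg ha hb (hs0 ht).le)]
  exact h t ht

theorem integrableOn_Ioc_sq (hp : -1 < p) (hc : 0 < c) (ha : 0 ≤ a) (hb : 0 ≤ b)
    (hr : 0 < r) : IntegrableOn (boundaryHeatIntegrand p c a b r) (Ioc 0 (r ^ 2)) :=
  integrableOn_of_le ha hb measurableSet_Ioc Ioc_subset_Ioi_self
    (integrableOn_const measure_Ioc_lt_top.ne)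
    fun _ ht ↦ le_const_of_le_sq hp hc ha hb hr ht.1 ht.2

theorem integrableOn_Ioi_sq (hp : 1 < p) (hc : 0 ≤ c) (ha : 0 ≤ a) (hb : 0 ≤ b)
    (hr : 0 < r) : IntegrableOn (boundaryHeatIntegrand p c a b r) (Ioi (r ^ 2)) :=
  integrableOn_of_le ha hb measurableSet_Ioi (Ioi_subset_Ioi (sq_nonneg r))
    ((integrableOn_Ioi_rpow_of_lt (by linarith) (pow_pos hr 2)).const_mul _)
    fun _ ht ↦ le_rpow_of_sq_le hc ha hb hr (le_of_lt ht)

theorem integrableOn_Ioi (hp : 1 < p) (hc : 0 < c) (ha : 0 ≤ a) (hb : 0 ≤ b) (hr : 0 < r) :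
    IntegrableOn (boundaryHeatIntegrand p c a b r) (Ioi 0) := by
  rw [← Ioc_union_Ioi_eq_Ioi (sq_nonneg r)]
  exact (integrableOn_Ioc_sq (by linarith) hc ha hb hr).union
    (integrableOn_Ioi_sq hp hc.le ha hb hr)

theorem setIntegral_Ioi_le (hp : 1 < p) (hc : 0 < c) (ha : 0 ≤ a) (hb : 0 ≤ b) (hr : 0 < r) :
    ∫ t in Ioi 0, boundaryHeatIntegrand p c a b r t ≤
      (((p + 1) / exp 1) ^ (p + 1) * c ^ (-(p + 1)) + 1 / (p - 1)) *
        ((r ^ 2) ^ (1 - p) * min 1 (a * b / r ^ 2)) := by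
  set M := min 1 (a * b / r ^ 2)
  have hr2 : 0 < r ^ 2 := pow_pos hr 2
  have hsmall : ∫ t in Ioc 0 (r ^ 2), boundaryHeatIntegrand p c a b r t ≤
      ((p + 1) / exp 1) ^ (p + 1) * c ^ (-(p + 1)) * ((r ^ 2) ^ (1 - p) * M) := by
    refine (setIntegral_mono_on (integrableOn_Ioc_sq (by linarith) hc ha hb hr)
      (integrableOn_const measure_Ioc_lt_top.ne) measurableSet_Ioc
      fun _ ht ↦ le_const_of_le_sq (by linarith) hc ha hb hr ht.1 ht.2).trans_eq ?_
    rw [setIntegral_const, volume_real_Ioc_of_le hr2.le, smul_eq_mul, sub_zero, sub_eq_add_neg,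
      rpow_add hr2, rpow_one]
    ring
  have hlarge : ∫ t in Ioi (r ^ 2), boundaryHeatIntegrand p c a b r t ≤
      1 / (p - 1) * ((r ^ 2) ^ (1 - p) * M) := by
    refine (setIntegral_mono_on (integrableOn_Ioi_sq hp hc.le ha hb hr)
      ((integrableOn_Ioi_rpow_of_lt (by linarith) hr2).const_mul M) measurableSet_Ioi
      fun _ ht ↦ le_rpow_of_sq_le hc.le ha hb hr (le_of_lt ht)).trans_eq ?_
    rw [integral_const_mul, integral_Ioi_rpow_of_lt (by linarith) hr2, neg_add_eq_sub]
    have h1 : 1 - p ≠ 0 := by linarith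
    have h2 : p - 1 ≠ 0 := by linarith
    field_simp
    ring
  rw [← Ioc_union_Ioi_eq_Ioi hr2.le, setIntegral_union Ioc_disjoint_Ioi_same measurableSet_Ioi
    (integrableOn_Ioc_sq (by linarith) hc ha hb hr) (integrableOn_Ioi_sq hp hc.le ha hb hr)]
  linarith

theorem setIntegral_Ioc_le (hp : 1 < p) (hc : 0 < c) (ha : 0 ≤ a) (hb : 0 ≤ b) (hr : 0 < r) :
    ∫ t in Ioc 0 T, boundaryHeatIntegrand p c a b r t ≤
      (((p + 1) / exp 1) ^ (p + 1) * c ^ (-(p + 1)) + 1 / (p - 1)) *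
        ((r ^ 2) ^ (1 - p) * min 1 (a * b / r ^ 2)) :=
  (setIntegral_mono_set (integrableOn_Ioi hp hc ha hb hr)
    (ae_restrict_of_forall_mem measurableSet_Ioi fun _ ht ↦ nonneg ha hb (le_of_lt ht))
    Ioc_subset_Ioi_self.eventuallyLE).trans (setIntegral_Ioi_le hp hc ha hb hr)

theorem le_setIntegral_Ioc (hp : 1 < p) (hc : 0 < c) (ha : 0 ≤ a) (hb : 0 ≤ b) (hr : 0 < r)
    (hab : |a - b| ≤ r) (hrT : r ^ 2 ≤ T) :
    exp (-(2 * c)) / 4 * ((r ^ 2) ^ (1 - p) * min 1 (a * b / r ^ 2)) ≤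
      ∫ t in Ioc 0 T, boundaryHeatIntegrand p c a b r t := by
  have hr2 : 0 < r ^ 2 := pow_pos hr 2
  have hint : IntegrableOn (boundaryHeatIntegrand p c a b r) (Ioc 0 T) :=
    (integrableOn_Ioi hp hc ha hb hr).mono_set Ioc_subset_Ioi_self
  have hsub : Ioc (r ^ 2 / 2) (r ^ 2) ⊆ Ioc 0 T := Ioc_subset_Ioc (by positivity) hrT
  have hmin : min 1 (a * b / r ^ 2) ≤ 2 * (min 1 (a / r) * min 1 (b / r)) := by
    have h := min_one_mul_le_two_mul_min_one_mul_min_one (div_nonneg ha hr.le)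
      (div_nonneg hb hr.le) (by rwa [← sub_div, abs_div, abs_of_pos hr, div_le_one hr])
    rwa [div_mul_div_comm, ← sq] at h
  calc exp (-(2 * c)) / 4 * ((r ^ 2) ^ (1 - p) * min 1 (a * b / r ^ 2))
      = exp (-(2 * c)) * (r ^ 2) ^ (-p) * r ^ 2 / 4 * min 1 (a * b / r ^ 2) := by
        rw [sub_eq_add_neg, rpow_add hr2, rpow_one]; ring
    _ ≤ exp (-(2 * c)) * (r ^ 2) ^ (-p) * r ^ 2 / 4 *
          (2 * (min 1 (a / r) * min 1 (b / r))) := by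
        gcongr
    _ = ∫ t in Ioc (r ^ 2 / 2) (r ^ 2),
          min 1 (a / r) * min 1 (b / r) * ((r ^ 2) ^ (-p) * exp (-(2 * c))) := by
        rw [setIntegral_const, volume_real_Ioc_of_le (by linarith), smul_eq_mul]; ring
    _ ≤ ∫ t in Ioc (r ^ 2 / 2) (r ^ 2), boundaryHeatIntegrand p c a b r t :=
        setIntegral_mono_on (integrableOn_const measure_Ioc_lt_top.ne) (hint.mono_set hsub)
          measurableSet_Ioc fun _ ht ↦ const_le_of_mem_Ioc (by linarith) hc.le ha hb hr ht
    _ ≤ ∫ t in Ioc 0 T, boundaryHeatIntegrand p c a b r t :=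
        setIntegral_mono_set hint
          (ae_restrict_of_forall_mem measurableSet_Ioc fun _ ht ↦ nonneg ha hb ht.1.le)
          hsub.eventuallyLE

end boundaryHeatIntegrand

theorem stmt_5_general (d : ℕ) (hd : 3 ≤ d) (c1 T : ℝ) (hc1 : 0 < c1)
    (D : Set (EuclideanSpace ℝ (Fin d))) (hDb : Bornology.IsBounded D)
    (hdiam : (EMetric.diam D).toReal ^ 2 = T) :
    ∃ c > (0:ℝ), ∃ C > (0:ℝ), ∀ x ∈ D, ∀ y ∈ D, x ≠ y →
      c * ((1 / dist x y ^ (d - 2)) * min 1 (infDist x Dᶜ * infDist y Dᶜ / dist x y ^ 2)) ≤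
        (∫ t in Ioc (0:ℝ) T,
          min 1 (infDist x Dᶜ / Real.sqrt t) * min 1 (infDist y Dᶜ / Real.sqrt t) *
            (t ^ (-(d:ℝ) / 2) * Real.exp (-c1 * dist x y ^ 2 / t))) ∧
      (∫ t in Ioc (0:ℝ) T,
          min 1 (infDist x Dᶜ / Real.sqrt t) * min 1 (infDist y Dᶜ / Real.sqrt t) *
            (t ^ (-(d:ℝ) / 2) * Real.exp (-c1 * dist x y ^ 2 / t))) ≤
        C * ((1 / dist x y ^ (d - 2)) * min 1 (infDist x Dᶜ * infDist y Dᶜ / dist x y ^ 2)) := by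
  have hp : 1 < (d : ℝ) / 2 := by
    rw [lt_div_iff₀ two_pos]; exact_mod_cast (by omega : 1 * 2 < d)
  refine ⟨exp (-(2 * c1)) / 4, by positivity,
    (((d : ℝ) / 2 + 1) / exp 1) ^ ((d : ℝ) / 2 + 1) * c1 ^ (-((d : ℝ) / 2 + 1)) +
      1 / ((d : ℝ) / 2 - 1),
    add_pos (mul_pos (by positivity) (rpow_pos_of_pos hc1 _)) (one_div_pos.2 (by linarith)),
    fun x hx y hy hxy ↦ ?_⟩
  have hr : 0 < dist x y := dist_pos.2 hxy
  have hrT : dist x y ^ 2 ≤ T :=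
    hdiam ▸ pow_le_pow_left₀ dist_nonneg (dist_le_diam_of_mem hDb hx hy) 2
  have hlip : |infDist x Dᶜ - infDist y Dᶜ| ≤ dist x y := by
    simpa [Real.dist_eq] using (lipschitz_infDist_pt (s := Dᶜ)).dist_le_mul x y
  rw [← sq_rpow_one_sub_div_two hr.le (by omega), neg_div]
  exact ⟨boundaryHeatIntegrand.le_setIntegral_Ioc hp hc1 infDist_nonneg infDist_nonneg hr hlip hrT,
    boundaryHeatIntegrand.setIntegral_Ioc_le hp hc1 infDist_nonneg infDist_nonneg hr⟩

theorem stmt_5 (d : ℕ) (hd : 3 ≤ d) (c1 T : ℝ) (hc1 : 0 < c1) (hT : 0 < T)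
    (D : Set (EuclideanSpace ℝ (Fin d))) (hDo : IsOpen D) (hDb : Bornology.IsBounded D)
    (hdiam : (EMetric.diam D).toReal ^ 2 = T) :
    ∃ c > (0:ℝ), ∃ C > (0:ℝ), ∀ x ∈ D, ∀ y ∈ D, x ≠ y →
      c * ((1 / dist x y ^ (d - 2)) * min 1 (infDist x Dᶜ * infDist y Dᶜ / dist x y ^ 2)) ≤
        (∫ t in Ioc (0:ℝ) T,
          min 1 (infDist x Dᶜ / Real.sqrt t) * min 1 (infDist y Dᶜ / Real.sqrt t) *
            (t ^ (-(d:ℝ) / 2) * Real.exp (-c1 * dist x y ^ 2 / t))) ∧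
      (∫ t in Ioc (0:ℝ) T,
          min 1 (infDist x Dᶜ / Real.sqrt t) * min 1 (infDist y Dᶜ / Real.sqrt t) *
            (t ^ (-(d:ℝ) / 2) * Real.exp (-c1 * dist x y ^ 2 / t))) ≤
        C * ((1 / dist x y ^ (d - 2)) * min 1 (infDist x Dᶜ * infDist y Dᶜ / dist x y ^ 2)) :=
  stmt_5_general d hd c1 T hc1 D hDb hdiam
end

section
/- Let $d = 2$ and $T > 0$. There is a constant $c > 0$ (depending on $T$) such that for all distinct $x, y$ in a bounded open set $D \subset \mathbb{R}^2$ with $\mathrm{diam}(D)^2 \le T$: $$\int_0^T \Big(1 \wedge \frac{\delta_D(x)}{\sqrt t}\Big)\Big(1 \wedge \frac{\delta_D(y)}{\sqrt t}\Big)\Big(t^{-1} \wedge \frac{t}{|x-y|^{4}}\Big) dt \le c\, \log\Big(1 + \frac{\delta_D(x)\delta_D(y)}{|x-y|^2}\Big).$$ -/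
open Set MeasureTheory Metric

/-!
Put `s = r ^ 2` and `c = a b`, where `a`, `b` are the distances of `x`, `y` to the boundary and
`r = |x - y|`. The integrand is at most `min 1 (c / s) / s` at every time, which controls the
integral over `(0, s]` by `min 1 (c / s)`. For `t ≥ s` it is at most
`min 1 (c / t) / t ≤ 2 (1 / t - 1 / (t + c))`, and the integral of the right-hand side over
`[s, ∞)` is `2 log (1 + c / s)`. Finally `min 1 u ≤ 2 u / (1 + u) ≤ 2 log (1 + u)`. The resulting
bound does not depend on `T`.
-/

lemma min_one_div_le_two_mul_div_add {c t : ℝ} (hc : 0 ≤ c) (ht : 0 < t) :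
    min 1 (c / t) ≤ 2 * c / (t + c) := by
  rcases le_total c t with h | h
  · calc min 1 (c / t) ≤ c / t := min_le_right _ _
      _ ≤ 2 * c / (t + c) := by rw [div_le_div_iff₀ ht (by linarith)]; nlinarith
  · calc min 1 (c / t) ≤ 1 := min_le_left _ _
      _ ≤ 2 * c / (t + c) := by rw [le_div_iff₀ (by linarith)]; linarith

lemma min_one_le_two_mul_log_one_add {u : ℝ} (hu : 0 ≤ u) :
    min 1 u ≤ 2 * Real.log (1 + u) := by
  have hpos : 0 < 1 + u := by linarith
  calc min 1 u ≤ 2 * u / (1 + u) := by simpa using min_one_div_le_two_mul_div_add hu one_pos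
    _ = 2 * (1 - (1 + u)⁻¹) := by field_simp; ring
    _ ≤ 2 * Real.log (1 + u) := by gcongr; exact Real.one_sub_inv_le_log_of_pos hpos

lemma integral_inv_sub_inv_add_le {s T c : ℝ} (hs : 0 < s) (hsT : s ≤ T) (hc : 0 ≤ c) :
    ∫ t in s..T, (t⁻¹ - (t + c)⁻¹) ≤ Real.log (1 + c / s) := by
  have hT : 0 < T := hs.trans_le hsT
  have hinv : ∀ p q : ℝ, 0 < p → 0 < q → IntervalIntegrable (fun t : ℝ => t⁻¹) volume p q :=
    fun p q hp hq => intervalIntegrable_inv_iff.2 (Or.inr (notMem_uIcc_of_lt hp hq))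
  have hinv_add : IntervalIntegrable (fun t : ℝ => (t + c)⁻¹) volume s T := by
    simpa using (hinv (s + c) (T + c) (by linarith) (by linarith)).comp_add_right c
  rw [intervalIntegral.integral_sub (hinv s T hs hT) hinv_add,
    intervalIntegral.integral_comp_add_right (fun t => t⁻¹), integral_inv_of_pos hs hT,
    integral_inv_of_pos (by linarith) (by linarith), show 1 + c / s = (s + c) / s by field_simp,
    Real.log_div hT.ne' hs.ne', Real.log_div (by linarith) (by linarith),
    Real.log_div (by linarith) hs.ne']
  linarith [Real.log_le_log hT (by linarith : T ≤ T + c)]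

section DirichletHeatBound

/-- The two-dimensional Dirichlet heat kernel bound at time `t` for points at distances `a` and `b`
from the boundary and at distance `r` from each other; the last factor bounds
`t⁻¹ exp (-r ^ 2 / t)` up to a constant. -/
noncomputable def dirichletHeatBound (a b r t : ℝ) : ℝ :=
  min 1 (a / √t) * min 1 (b / √t) * min t⁻¹ (t / r ^ 4)

variable {a b r t : ℝ}

lemma min_one_div_sqrt_mul_min_one_div_sqrt_le (ha : 0 ≤ a) (hb : 0 ≤ b) (ht : 0 < t) :
    min 1 (a / √t) * min 1 (b / √t) ≤ min 1 (a * b / t) := by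
  have hb' : 0 ≤ min 1 (b / √t) := by positivity
  refine le_min (mul_le_one₀ (min_le_left _ _) hb' (min_le_left _ _)) ?_
  calc min 1 (a / √t) * min 1 (b / √t) ≤ a / √t * (b / √t) :=
        mul_le_mul (min_le_right _ _) (min_le_right _ _) hb' (by positivity)
    _ = a * b / t := by rw [div_mul_div_comm, Real.mul_self_sqrt ht.le]

lemma min_inv_div_pow_four_le (hr : 0 < r) : min t⁻¹ (t / r ^ 4) ≤ (r ^ 2)⁻¹ := by
  rcases le_total t (r ^ 2) with h | h
  · calc min t⁻¹ (t / r ^ 4) ≤ t / r ^ 4 := min_le_right _ _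
      _ ≤ r ^ 2 / r ^ 4 := by gcongr
      _ = (r ^ 2)⁻¹ := by field_simp
  · exact (min_le_left _ _).trans (inv_anti₀ (by positivity) h)

lemma dirichletHeatBound_nonneg (ha : 0 ≤ a) (hb : 0 ≤ b) (ht : 0 ≤ t) :
    0 ≤ dirichletHeatBound a b r t := by
  unfold dirichletHeatBound
  positivity

lemma dirichletHeatBound_le (ha : 0 ≤ a) (hb : 0 ≤ b) (hr : 0 < r) (ht : 0 < t) :
    dirichletHeatBound a b r t ≤ min 1 (a * b / r ^ 2) / r ^ 2 := by
  have hk := min_one_div_sqrt_mul_min_one_div_sqrt_le ha hb ht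
  have hm : 0 ≤ min t⁻¹ (t / r ^ 4) := by positivity
  rw [← min_div_div_right (by positivity)]
  refine le_min ?_ ?_
  · calc dirichletHeatBound a b r t ≤ min t⁻¹ (t / r ^ 4) :=
          mul_le_of_le_one_left hm (hk.trans (min_le_left _ _))
      _ ≤ 1 / r ^ 2 := by simpa using min_inv_div_pow_four_le hr
  · calc dirichletHeatBound a b r t ≤ a * b / t * (t / r ^ 4) :=
          mul_le_mul (hk.trans (min_le_right _ _)) (min_le_right _ _) hm (by positivity)
      _ = a * b / r ^ 2 / r ^ 2 := by field_simp

lemma dirichletHeatBound_le_two_mul_inv_sub_inv (ha : 0 ≤ a) (hb : 0 ≤ b) (ht : 0 < t) :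
    dirichletHeatBound a b r t ≤ 2 * (t⁻¹ - (t + a * b)⁻¹) := by
  have hm : 0 ≤ min t⁻¹ (t / r ^ 4) := by positivity
  have hab : 0 ≤ a * b := mul_nonneg ha hb
  calc dirichletHeatBound a b r t ≤ min 1 (a * b / t) * t⁻¹ :=
        mul_le_mul (min_one_div_sqrt_mul_min_one_div_sqrt_le ha hb ht) (min_le_left _ _) hm
          (by positivity)
    _ ≤ 2 * (a * b) / (t + a * b) * t⁻¹ := by
        gcongr
        exact min_one_div_le_two_mul_div_add hab ht
    _ = 2 * (t⁻¹ - (t + a * b)⁻¹) := by field_simp; ring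

lemma norm_dirichletHeatBound_le (ha : 0 ≤ a) (hb : 0 ≤ b) (hr : 0 < r) (ht : 0 < t) :
    ‖dirichletHeatBound a b r t‖ ≤ min 1 (a * b / r ^ 2) / r ^ 2 := by
  rw [Real.norm_of_nonneg (dirichletHeatBound_nonneg ha hb ht.le)]
  exact dirichletHeatBound_le ha hb hr ht

lemma integrableOn_dirichletHeatBound (ha : 0 ≤ a) (hb : 0 ≤ b) (hr : 0 < r) (T : ℝ) :
    IntegrableOn (dirichletHeatBound a b r) (Ioc 0 T) :=
  Measure.integrableOn_of_bounded measure_Ioc_lt_top.ne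
    (by unfold dirichletHeatBound; fun_prop) ((ae_restrict_iff' measurableSet_Ioc).2
      (.of_forall fun _ ht => norm_dirichletHeatBound_le ha hb hr ht.1))

lemma setIntegral_dirichletHeatBound_le_of_le_sq {T : ℝ} (ha : 0 ≤ a) (hb : 0 ≤ b) (hr : 0 < r)
    (hT : T ≤ r ^ 2) : ∫ t in Ioc 0 T, dirichletHeatBound a b r t ≤ min 1 (a * b / r ^ 2) := by
  have hbound := norm_setIntegral_le_of_norm_le_const (s := Ioc 0 T)
    (measure_Ioc_lt_top (μ := volume)) fun _ ht => norm_dirichletHeatBound_le ha hb hr ht.1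
  rw [Real.volume_real_Ioc, sub_zero] at hbound
  calc ∫ t in Ioc 0 T, dirichletHeatBound a b r t
      ≤ min 1 (a * b / r ^ 2) / r ^ 2 * max T 0 := (Real.le_norm_self _).trans hbound
    _ ≤ min 1 (a * b / r ^ 2) / r ^ 2 * r ^ 2 := by gcongr; exact max_le hT (sq_nonneg r)
    _ = min 1 (a * b / r ^ 2) := div_mul_cancel₀ _ (by positivity)

lemma setIntegral_Ioc_sq_dirichletHeatBound_le {T : ℝ} (ha : 0 ≤ a) (hb : 0 ≤ b) (hr : 0 < r)
    (hT : r ^ 2 ≤ T) :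
    ∫ t in Ioc (r ^ 2) T, dirichletHeatBound a b r t ≤ 2 * Real.log (1 + a * b / r ^ 2) := by
  have hs : 0 < r ^ 2 := by positivity
  have hg : IntervalIntegrable (fun t : ℝ => 2 * (t⁻¹ - (t + a * b)⁻¹)) volume (r ^ 2) T :=
    ContinuousOn.intervalIntegrable (by
      fun_prop (disch := intro t ht; rw [uIcc_of_le hT] at ht; have := hs.trans_le ht.1; positivity))
  calc ∫ t in Ioc (r ^ 2) T, dirichletHeatBound a b r t
      ≤ ∫ t in Ioc (r ^ 2) T, 2 * (t⁻¹ - (t + a * b)⁻¹) :=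
        setIntegral_mono_on ((integrableOn_dirichletHeatBound ha hb hr T).mono_set
          (Ioc_subset_Ioc_left hs.le)) ((intervalIntegrable_iff_integrableOn_Ioc_of_le hT).1 hg)
          measurableSet_Ioc fun t ht =>
            dirichletHeatBound_le_two_mul_inv_sub_inv ha hb (hs.trans ht.1)
    _ = 2 * ∫ t in r ^ 2..T, (t⁻¹ - (t + a * b)⁻¹) := by
        rw [intervalIntegral.integral_of_le hT, integral_const_mul]
    _ ≤ 2 * Real.log (1 + a * b / r ^ 2) := by
        gcongr
        exact integral_inv_sub_inv_add_le hs hT (mul_nonneg ha hb)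

theorem setIntegral_dirichletHeatBound_le (ha : 0 ≤ a) (hb : 0 ≤ b) (hr : 0 < r) (T : ℝ) :
    ∫ t in Ioc 0 T, dirichletHeatBound a b r t ≤ 4 * Real.log (1 + a * b / r ^ 2) := by
  have hu : 0 ≤ a * b / r ^ 2 := by positivity
  have hnear := min_one_le_two_mul_log_one_add hu
  have hlog : 0 ≤ Real.log (1 + a * b / r ^ 2) := Real.log_nonneg (by linarith)
  rcases le_total T (r ^ 2) with hT | hT
  · linarith [setIntegral_dirichletHeatBound_le_of_le_sq ha hb hr hT]
  · have hint := integrableOn_dirichletHeatBound ha hb hr T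
    rw [← Ioc_union_Ioc_eq_Ioc (sq_nonneg r) hT, setIntegral_union (Ioc_disjoint_Ioc_of_le le_rfl)
      measurableSet_Ioc (hint.mono_set (Ioc_subset_Ioc_right hT))
      (hint.mono_set (Ioc_subset_Ioc_left (sq_nonneg r)))]
    linarith [setIntegral_dirichletHeatBound_le_of_le_sq ha hb hr le_rfl,
      setIntegral_Ioc_sq_dirichletHeatBound_le ha hb hr hT]

end DirichletHeatBound

theorem stmt_7_general (T : ℝ) :
    ∃ c > (0:ℝ), ∀ (D : Set (EuclideanSpace ℝ (Fin 2))), IsOpen D →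
      Bornology.IsBounded D → (EMetric.diam D).toReal ^ 2 ≤ T →
      ∀ x ∈ D, ∀ y ∈ D, x ≠ y →
        (∫ t in Ioc (0:ℝ) T,
            min 1 (infDist x Dᶜ / Real.sqrt t) * min 1 (infDist y Dᶜ / Real.sqrt t) *
              min t⁻¹ (t / dist x y ^ 4)) ≤
          c * Real.log (1 + infDist x Dᶜ * infDist y Dᶜ / dist x y ^ 2) :=
  ⟨4, four_pos, fun _ _ _ _ _ _ _ _ hxy =>
    setIntegral_dirichletHeatBound_le infDist_nonneg infDist_nonneg (dist_pos.2 hxy) T⟩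

theorem stmt_7 (T : ℝ) (hT : 0 < T) :
    ∃ c > (0:ℝ), ∀ (D : Set (EuclideanSpace ℝ (Fin 2))), IsOpen D →
      Bornology.IsBounded D → (EMetric.diam D).toReal ^ 2 ≤ T →
      ∀ x ∈ D, ∀ y ∈ D, x ≠ y →
        (∫ t in Ioc (0:ℝ) T,
            min 1 (infDist x Dᶜ / Real.sqrt t) * min 1 (infDist y Dᶜ / Real.sqrt t) *
              min t⁻¹ (t / dist x y ^ 4)) ≤
          c * Real.log (1 + infDist x Dᶜ * infDist y Dᶜ / dist x y ^ 2) :=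
  stmt_7_general T
end
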